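/- arXiv:2203.12158 — 3 statements merged into one kernel-verified Lean document; each statement's English description precedes it below -/
import Mathlib

section
/- Let G be a group acting on a set X and let Y ⊆ X be a subset that is both G-invariant and Aut_G(X)-invariant (i.e., τ(y) ∈ Y for all y ∈ Y and τ ∈ Aut_G(X)). Then Aut_G(Y) is isomorphic to a normal subgroup of Aut_G(X); specifically, the image of Aut_G(Y) under the embedding that extends each τ ∈ Aut_G(Y) by the identity on X \ Y is a normal subgroup of Aut_G(X). -/
/-- The monoid of all `G`-equivariant transformations of `X`, as a submonoid of
`Function.End X` (composition of functions). -/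
def gEnd (G X : Type*) [Group G] [MulAction G X] : Submonoid (Function.End X) where
  carrier := {f | ∀ (g : G) (x : X), f (g • x) = g • f x}
  one_mem' := fun _ _ => rfl
  mul_mem' := fun {f₁ f₂} h₁ h₂ g x => by
    show f₁ (f₂ (g • x)) = g • f₁ (f₂ x)
    rw [h₂, h₁]

/-- The group of all bijective `G`-equivariant transformations of `X`, as a subgroup of
`Equiv.Perm X`. -/
def gAut (G X : Type*) [Group G] [MulAction G X] : Subgroup (Equiv.Perm X) where
  carrier := {f | ∀ (g : G) (x : X), f (g • x) = g • f x}
  one_mem' := fun _ _ => rfl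
  mul_mem' := fun {f₁ f₂} h₁ h₂ g x => by
    show f₁ (f₂ (g • x)) = g • f₁ (f₂ x)
    rw [h₂, h₁]
  inv_mem' := fun {f} hf g x => f.injective (by
    rw [show ∀ y, f (f⁻¹ y) = y from fun y => f.apply_symm_apply y, hf,
      show ∀ y, f (f⁻¹ y) = y from fun y => f.apply_symm_apply y])

/-! The extension of a `G`-equivariant permutation of `Y` by the identity on `X \ Y` is again
`G`-equivariant, because `Y` and its complement are `G`-invariant. Its image in `Aut_G(X)` is
exactly the pointwise stabilizer of `X \ Y`, and since every element of `Aut_G(X)` maps `X \ Y`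
onto itself, conjugation preserves this stabilizer. -/

open Equiv Perm MulAction Pointwise

theorem Equiv.Perm.apply_mem_iff_of_forall_notMem {α : Type*} {s : Set α} {τ : Perm α}
    (h : ∀ x ∉ s, τ x = x) (x : α) : τ x ∈ s ↔ x ∈ s := by
  by_cases hx : x ∈ s
  · refine iff_of_true ?_ hx
    by_contra hτx
    exact hτx (by rwa [τ.injective (h _ hτx)])
  · rw [h x hx]

theorem Set.smul_set_eq_of_forall_smul_set_subset {M α : Type*} [Group M] [MulAction M α]
    {s : Set α} (h : ∀ g : M, g • s ⊆ s) (g : M) : g • s = s :=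
  (h g).antisymm (Set.subset_smul_set_iff.2 (h g⁻¹))

theorem MulAction.fixingSubgroup_normal {M α : Type*} [Group M] [MulAction M α] {s : Set α}
    (h : ∀ g : M, g • s = s) : (fixingSubgroup M s).Normal :=
  ⟨fun _ hk g => Set.conj_mem_fixingSubgroup (h g) hk⟩

section gAutOfSubtype

variable {G X : Type*} [Group G] [MulAction G X] (Y : SubMulAction G X)

theorem ofSubtype_mem_gAut [DecidablePred (· ∈ Y)] {σ : Perm Y} (hσ : σ ∈ gAut G Y) :
    ofSubtype σ ∈ gAut G X := by
  intro g x
  by_cases hx : x ∈ Y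
  · rw [ofSubtype_apply_of_mem _ (Y.smul_mem g hx), ofSubtype_apply_of_mem _ hx]
    exact congrArg Subtype.val (hσ g ⟨x, hx⟩)
  · rw [ofSubtype_apply_of_not_mem _ ((Y.smul_mem_iff' g).not.2 hx),
      ofSubtype_apply_of_not_mem _ hx]

theorem subtypePerm_mem_gAut {τ : Perm X} (hτ : τ ∈ gAut G X) (h : ∀ x, τ x ∈ Y ↔ x ∈ Y) :
    τ.subtypePerm h ∈ gAut G Y :=
  fun g y => Subtype.ext (hτ g y)

variable [DecidablePred (· ∈ Y)]

def gAutOfSubtype : gAut G Y →* gAut G X :=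
  (ofSubtype.comp (gAut G Y).subtype).codRestrict _ fun σ => ofSubtype_mem_gAut Y σ.2

theorem gAutOfSubtype_injective : Function.Injective (gAutOfSubtype Y) := fun _ _ h =>
  Subtype.ext (ofSubtype_injective (congrArg Subtype.val h))

theorem range_gAutOfSubtype :
    (gAutOfSubtype Y).range = fixingSubgroup (gAut G X) (Y : Set X)ᶜ := by
  ext τ
  rw [mem_fixingSubgroup_iff]
  constructor
  · rintro ⟨σ, rfl⟩ x hx
    exact ofSubtype_apply_of_not_mem _ hx
  · intro hτ
    have hτY : ∀ x, (τ : Perm X) x ∈ Y ↔ x ∈ Y := Perm.apply_mem_iff_of_forall_notMem hτ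
    refine ⟨⟨_, subtypePerm_mem_gAut Y τ.2 hτY⟩, Subtype.ext ?_⟩
    exact ofSubtype_subtypePerm hτY fun x hx => by_contra fun hxY => hx (hτ x hxY)

end gAutOfSubtype

/-- If `Y ⊆ X` is `G`-invariant and `Aut_G(X)`-invariant, then the image
of `Aut_G(Y)` in `Aut_G(X)` under the extension-by-identity embedding is a normal subgroup. -/
theorem stmt1 {G X : Type*} [Group G] [MulAction G X] (Y : SubMulAction G X)
    (hY : ∀ τ : Equiv.Perm X, τ ∈ gAut G X → ∀ y : X, y ∈ Y → τ y ∈ Y) :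
    ∃ Ψ : gAut G ↑Y →* gAut G X,
      Function.Injective Ψ ∧
      (∀ σ : gAut G ↑Y,
        (∀ y : ↑Y, (↑(Ψ σ) : Equiv.Perm X) ↑y = ↑((↑σ : Equiv.Perm ↑Y) y)) ∧
        (∀ x : X, x ∉ Y → (↑(Ψ σ) : Equiv.Perm X) x = x)) ∧
      Ψ.range.Normal := by
  classical
  have hYc (τ : gAut G X) : τ • (Y : Set X)ᶜ = (Y : Set X)ᶜ := by
    rw [Set.smul_set_compl, Set.smul_set_eq_of_forall_smul_set_subset
      (fun τ : gAut G X => Set.smul_set_subset_iff.2 fun y hy => hY τ τ.2 y hy) τ]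
  refine ⟨gAutOfSubtype Y, gAutOfSubtype_injective Y,
    fun σ => ⟨fun y => ofSubtype_apply_coe _ y, fun x hx => ofSubtype_apply_of_not_mem _ hx⟩, ?_⟩
  rw [range_gAutOfSubtype]
  exact fixingSubgroup_normal hYc
end

section
/- Let G be a group acting on a set X and let H = G_x be the stabilizer of some point x ∈ X. Let B_[H] = {y ∈ X : G_y is conjugate to H in G} and let O_[H] be the set of G-orbits contained in B_[H]. Then Aut_G(B_[H]) is isomorphic to the unrestricted wreath product (N_G(H)/H) ≀ Sym(O_[H]), i.e., the semidirect product of the direct product of copies of N_G(H)/H indexed by O_[H] with the symmetric group Sym(O_[H]) acting by permuting coordinates. -/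
/-- The conjugate subgroup `g K g⁻¹`. -/
def conjSub {G : Type*} [Group G] (g : G) (K : Subgroup G) : Subgroup G :=
  Subgroup.map (MulAut.conj g).toMonoidHom K

/-- The set `O_[H]` of `G`-orbits of `X` whose point stabilizers are conjugate to `H`. -/
def classOrbits (G X : Type*) [Group G] [MulAction G X] (H : Subgroup G) : Set (Set X) :=
  {s | ∃ y : X, (∃ g : G, MulAction.stabilizer G y = conjSub g H) ∧ s = MulAction.orbit G y}

/-- The quotient `N_G(H)/H` of the normalizer of `H` by `H`. -/
abbrev normQuot {G : Type*} [Group G] (H : Subgroup G) :=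
  Subgroup.normalizer (H : Set G) ⧸ H.subgroupOf (Subgroup.normalizer (H : Set G))

/-- The action of `Sym(Δ)` on `K^Δ` permuting the coordinates, as a homomorphism
into the automorphism group of the direct product `K^Δ`; it is used to form the
unrestricted wreath product `K ≀ Sym(Δ) = K^Δ ⋊ Sym(Δ)`. -/
def permCoordAut (K Δ : Type*) [Group K] : Equiv.Perm Δ →* MulAut (Δ → K) where
  toFun σ :=
    { toFun := fun f => f ∘ σ.symm
      invFun := fun f => f ∘ σ
      left_inv := fun f => by funext δ; simp
      right_inv := fun f => by funext δ; simp
      map_mul' := fun f g => rfl }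
  map_one' := by ext f δ; rfl
  map_mul' := fun σ τ => by ext f δ; rfl

/-!
Choosing in each orbit of `O_[H]` a point whose stabilizer is exactly `H` identifies `B_[H]`
`G`-equivariantly with `O_[H] × G/H`, where `G` acts on the second factor. An equivariant
permutation `τ` of `O_[H] × G/H` maps orbits to orbits, giving `σ ∈ Sym(O_[H])`, and is determined
on the orbit `i` by `τ(i, H) = (σ i, gH)`. As `τ` preserves stabilizers, `gHg⁻¹ = H`, so
`g ∈ N_G(H)` and `τ` acts on that orbit by right multiplication by `g`, which only depends on
`gH ∈ N_G(H)/H`. Conversely every element of the wreath product acts in this way, faithfully.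
-/

open MulAction

section RightMultiplication

variable {G : Type*} [Group G] (H : Subgroup G)

/-- Right multiplication by `n⁻¹` rather than `n`, so that `normalizerToPerm` is a homomorphism. -/
def rightMulPerm (n : Subgroup.normalizer (H : Set G)) : Equiv.Perm (G ⧸ H) :=
  Quotient.congr (Equiv.mulRight (n : G)⁻¹) fun a b => by
    rw [QuotientGroup.leftRel_apply, QuotientGroup.leftRel_apply, Equiv.coe_mulRight,
      Subgroup.mem_normalizer_iff.mp n.2]
    group

lemma rightMulPerm_mk (n : Subgroup.normalizer (H : Set G)) (g : G) :
    rightMulPerm H n g = (g * (n : G)⁻¹ : G) := rfl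

def normalizerToPerm : Subgroup.normalizer (H : Set G) →* Equiv.Perm (G ⧸ H) where
  toFun := rightMulPerm H
  map_one' := by
    ext c
    induction c using QuotientGroup.induction_on
    simp [rightMulPerm_mk]
  map_mul' n m := by
    ext c
    induction c using QuotientGroup.induction_on
    simp [rightMulPerm_mk, mul_assoc]

def normQuotToPerm : normQuot H →* Equiv.Perm (G ⧸ H) :=
  QuotientGroup.lift _ (normalizerToPerm H) fun n hn => by
    ext c
    induction c using QuotientGroup.induction_on
    simpa [normalizerToPerm, rightMulPerm_mk, QuotientGroup.eq, Subgroup.mem_subgroupOf] using hn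

lemma normQuotToPerm_mk (n : Subgroup.normalizer (H : Set G)) (g : G) :
    normQuotToPerm H n g = (g * (n : G)⁻¹ : G) := rfl

lemma normQuotToPerm_smul (q : normQuot H) (g : G) (c : G ⧸ H) :
    normQuotToPerm H q (g • c) = g • normQuotToPerm H q c := by
  induction q using QuotientGroup.induction_on
  induction c using QuotientGroup.induction_on
  simp [normQuotToPerm_mk, mul_assoc]

lemma normQuotToPerm_injective : Function.Injective (normQuotToPerm H) := by
  refine (injective_iff_map_eq_one _).mpr fun q hq => ?_
  induction q using QuotientGroup.induction_on with | H n => ?_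
  have h := congrArg (· ((1 : G) : G ⧸ H)) hq
  simpa [normQuotToPerm_mk, QuotientGroup.eq, Subgroup.mem_subgroupOf] using h

end RightMultiplication

section Stabilizers

variable {G : Type*} [Group G]

lemma stabilizer_apply_of_mem_gAut {X : Type*} [MulAction G X] {τ : Equiv.Perm X}
    (hτ : τ ∈ gAut G X) (x : X) : stabilizer G (τ x) = stabilizer G x := by
  ext g
  rw [mem_stabilizer_iff, mem_stabilizer_iff, ← hτ g x, τ.injective.eq_iff]

lemma stabilizer_quotient_mk (H : Subgroup G) (g : G) :
    stabilizer G (g : G ⧸ H) = H.map (MulAut.conj g).toMonoidHom := by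
  conv_rhs => rw [← stabilizer_quotient H, ← stabilizer_smul_eq_stabilizer_map_conj]
  rw [Quotient.smul_mk, smul_eq_mul, mul_one]

lemma mem_normalizer_of_stabilizer_quotient_mk_eq {H : Subgroup G} {g : G}
    (h : stabilizer G (g : G ⧸ H) = H) : g ∈ Subgroup.normalizer (H : Set G) := by
  rw [Subgroup.mem_normalizer_iff_map_conj_eq, ← MulEquiv.toMonoidHom_eq_coe,
    ← stabilizer_quotient_mk, h]

end Stabilizers

abbrev WreathProduct (K Δ : Type*) [Group K] :=
  (Δ → K) ⋊[permCoordAut K Δ] Equiv.Perm Δ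

/-- `G` acts on `I × G ⧸ H` through the second factor only, unlike Mathlib's diagonal action
on products. -/
abbrev prodQuotientMulAction {G : Type*} [Group G] (H : Subgroup G) (I : Type*) :
    MulAction G (I × G ⧸ H) where
  smul g p := (p.1, g • p.2)
  one_smul p := Prod.ext rfl (one_smul G p.2)
  mul_smul g h p := Prod.ext rfl (mul_smul g h p.2)

attribute [local instance] prodQuotientMulAction

section Slices

variable {G : Type*} [Group G] {H : Subgroup G} {I : Type*}

lemma prod_smul_def (g : G) (p : I × G ⧸ H) : g • p = (p.1, g • p.2) := rfl

lemma prod_mk_eq_smul (i : I) (a : G) :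
    ((i, (a : G ⧸ H)) : I × G ⧸ H) = a • (i, ((1 : G) : G ⧸ H)) := by
  simp [prod_smul_def]

lemma stabilizer_prod_mk (i : I) (c : G ⧸ H) :
    stabilizer G ((i, c) : I × G ⧸ H) = stabilizer G c := by
  ext g
  simp [mem_stabilizer_iff, prod_smul_def]

lemma fst_apply_of_mem_gAut {τ : Equiv.Perm (I × G ⧸ H)} (hτ : τ ∈ gAut G (I × G ⧸ H))
    (p : I × G ⧸ H) : (τ p).1 = (τ (p.1, ((1 : G) : G ⧸ H))).1 := by
  obtain ⟨i, c⟩ := p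
  induction c using QuotientGroup.induction_on with | H a => ?_
  rw [prod_mk_eq_smul, hτ]
  rfl

def slicePerm (τ : gAut G (I × G ⧸ H)) : Equiv.Perm I where
  toFun i := (τ.1 (i, ((1 : G) : G ⧸ H))).1
  invFun i := (τ⁻¹.1 (i, ((1 : G) : G ⧸ H))).1
  left_inv i := by
    have h := fst_apply_of_mem_gAut τ⁻¹.2 (τ.1 (i, ((1 : G) : G ⧸ H)))
    dsimp only
    rw [← h]
    simp
  right_inv i := by
    have h := fst_apply_of_mem_gAut τ.2 (τ⁻¹.1 (i, ((1 : G) : G ⧸ H)))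
    dsimp only
    rw [← h]
    simp

lemma gAut_apply_mk (τ : gAut G (I × G ⧸ H)) (i : I) (a : G) :
    τ.1 (i, (a : G ⧸ H)) =
      (slicePerm τ i, ((a * (τ.1 (i, ((1 : G) : G ⧸ H))).2.out : G) : G ⧸ H)) := by
  rw [prod_mk_eq_smul, τ.2, prod_smul_def, ← smul_eq_mul, ← Quotient.smul_mk,
    QuotientGroup.out_eq']
  rfl

lemma gAut_out_mem_normalizer (τ : gAut G (I × G ⧸ H)) (i : I) :
    (τ.1 (i, ((1 : G) : G ⧸ H))).2.out ∈ Subgroup.normalizer (H : Set G) := by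
  refine mem_normalizer_of_stabilizer_quotient_mk_eq ?_
  rw [QuotientGroup.out_eq', ← stabilizer_prod_mk (τ.1 (i, _)).1, Prod.mk.eta,
    stabilizer_apply_of_mem_gAut τ.2, stabilizer_prod_mk, stabilizer_quotient]

variable (H I)

def wreathToGAut : WreathProduct (normQuot H) I →* gAut G (I × G ⧸ H) where
  toFun w := ⟨Equiv.prodShear w.right fun i => normQuotToPerm H (w.left (w.right i)),
    fun g p => Prod.ext rfl (normQuotToPerm_smul H _ g p.2)⟩
  map_one' := by
    ext p
    · rfl
    · simp
  map_mul' w₁ w₂ := by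
    ext p
    · rfl
    · simp [permCoordAut]

lemma wreathToGAut_injective : Function.Injective (wreathToGAut H I) := by
  refine (injective_iff_map_eq_one _).mpr fun w hw => ?_
  have hfix (p : I × G ⧸ H) : (wreathToGAut H I w).1 p = p := by rw [hw]; rfl
  have hright : w.right = 1 := Equiv.ext fun i => congrArg Prod.fst (hfix (i, ((1 : G) : G ⧸ H)))
  have hleft : w.left = 1 := funext fun j => normQuotToPerm_injective H <| Equiv.ext fun c => by
    simpa [wreathToGAut, hright] using congrArg Prod.snd (hfix (j, c))
  exact SemidirectProduct.ext hleft hright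

lemma wreathToGAut_surjective : Function.Surjective (wreathToGAut H I) := by
  intro τ
  let n : I → Subgroup.normalizer (H : Set G) := fun i => ⟨_, gAut_out_mem_normalizer τ i⟩
  refine ⟨⟨fun j => (n ((slicePerm τ).symm j) : normQuot H)⁻¹, slicePerm τ⟩, ?_⟩
  refine Subtype.ext (Equiv.ext fun ⟨i, c⟩ => ?_)
  induction c using QuotientGroup.induction_on with | H a => ?_
  rw [gAut_apply_mk τ]
  refine Prod.ext rfl ?_
  show normQuotToPerm H (n ((slicePerm τ).symm (slicePerm τ i)) : normQuot H)⁻¹ a = _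
  rw [Equiv.symm_apply_apply, ← QuotientGroup.mk_inv, normQuotToPerm_mk]
  simp [n]

noncomputable def wreathEquivGAut : WreathProduct (normQuot H) I ≃* gAut G (I × G ⧸ H) :=
  MulEquiv.ofBijective (wreathToGAut H I) ⟨wreathToGAut_injective H I, wreathToGAut_surjective H I⟩

end Slices

section Transport

variable {G Y Z : Type*} [Group G] [MulAction G Y] [MulAction G Z]

lemma permCongr_mem_gAut {e : Y ≃ Z} (he : ∀ (g : G) (y : Y), e (g • y) = g • e y)
    {τ : Equiv.Perm Y} (hτ : τ ∈ gAut G Y) : e.permCongr τ ∈ gAut G Z := fun g z => by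
  obtain ⟨y, rfl⟩ := e.surjective z
  simp only [Equiv.permCongr_apply, ← he, Equiv.symm_apply_apply]
  rw [hτ g y]

lemma symm_smul_of_smul {e : Y ≃ Z} (he : ∀ (g : G) (y : Y), e (g • y) = g • e y) (g : G)
    (z : Z) : e.symm (g • z) = g • e.symm z :=
  e.injective (by rw [he, Equiv.apply_symm_apply, Equiv.apply_symm_apply])

def gAutCongr (e : Y ≃ Z) (he : ∀ (g : G) (y : Y), e (g • y) = g • e y) :
    gAut G Y ≃* gAut G Z where
  toFun τ := ⟨e.permCongr τ, permCongr_mem_gAut he τ.2⟩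
  invFun τ := ⟨e.symm.permCongr τ, permCongr_mem_gAut (symm_smul_of_smul he) τ.2⟩
  left_inv τ := Subtype.ext (Equiv.ext fun y => by simp)
  right_inv τ := Subtype.ext (Equiv.ext fun z => by simp)
  map_mul' τ₁ τ₂ := Subtype.ext (e.permCongr_mul τ₁ τ₂)

end Transport

section OrbitDecomposition

variable {G Y I : Type*} [Group G] [MulAction G Y] {H : Subgroup G} {pt : I → Y}

noncomputable def prodQuotientToOrbits (hstab : ∀ i, stabilizer G (pt i) = H) :
    I × G ⧸ H → Y :=
  fun p => ofQuotientStabilizer G (pt p.1) (Subgroup.quotientEquivOfEq (hstab p.1).symm p.2)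

lemma prodQuotientToOrbits_smul (hstab : ∀ i, stabilizer G (pt i) = H) (g : G)
    (p : I × G ⧸ H) : prodQuotientToOrbits hstab (g • p) = g • prodQuotientToOrbits hstab p := by
  obtain ⟨i, c⟩ := p
  induction c using QuotientGroup.induction_on with | H a => ?_
  exact mul_smul g a (pt i)

lemma prodQuotientToOrbits_bijective (hstab : ∀ i, stabilizer G (pt i) = H)
    (hinj : Function.Injective fun i => orbit G (pt i)) (hcover : ∀ y, ∃ i, y ∈ orbit G (pt i)) :
    Function.Bijective (prodQuotientToOrbits hstab) := by
  constructor
  · rintro ⟨i, c⟩ ⟨j, d⟩ h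
    have hij : i = j := hinj <| by
      show orbit G (pt i) = orbit G (pt j)
      rw [← orbit_eq_iff.mpr (ofQuotientStabilizer_mem_orbit G (pt i) _),
        ← orbit_eq_iff.mpr (ofQuotientStabilizer_mem_orbit G (pt j) _)]
      exact congrArg (orbit G) h
    subst hij
    exact Prod.ext rfl ((Subgroup.quotientEquivOfEq _).injective
      (injective_ofQuotientStabilizer G (pt i) h))
  · intro y
    obtain ⟨i, a, rfl⟩ := hcover y
    exact ⟨(i, a), rfl⟩

end OrbitDecomposition

lemma exists_stabilizer_eq_of_mem_classOrbits {G X : Type*} [Group G] [MulAction G X]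
    {H : Subgroup G} {s : Set X} (hs : s ∈ classOrbits G X H) :
    ∃ z, stabilizer G z = H ∧ s = orbit G z := by
  obtain ⟨y, ⟨g, hg⟩, rfl⟩ := hs
  refine ⟨g⁻¹ • y, Subgroup.map_injective (f := (MulAut.conj g).toMonoidHom)
    (MulAut.conj g).injective ?_, (orbit_smul g⁻¹ y).symm⟩
  rw [← stabilizer_smul_eq_stabilizer_map_conj, smul_inv_smul]
  exact hg

/-- For a point stabilizer `H = G_x`, with `B_[H]` the set of points
whose stabilizer is conjugate to `H` and `O_[H]` the set of `G`-orbits inside `B_[H]`,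
`Aut_G(B_[H]) ≅ (N_G(H)/H) ≀ Sym(O_[H])` (unrestricted wreath product, i.e. the
semidirect product of the direct product of copies of `N_G(H)/H` indexed by `O_[H]`
with `Sym(O_[H])` permuting coordinates). -/
theorem stmt7 {G X : Type*} [Group G] [MulAction G X] (x : X) (B : SubMulAction G X)
    (hB : ∀ z : X, z ∈ B ↔
      ∃ g : G, MulAction.stabilizer G z = conjSub g (MulAction.stabilizer G x)) :
    Nonempty ((gAut G ↑B) ≃*
      ((↑(classOrbits G X (MulAction.stabilizer G x)) → normQuot (MulAction.stabilizer G x))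
        ⋊[permCoordAut (normQuot (MulAction.stabilizer G x))
            ↑(classOrbits G X (MulAction.stabilizer G x))]
        Equiv.Perm ↑(classOrbits G X (MulAction.stabilizer G x)))) := by
  set H := stabilizer G x
  choose pt hstab horbit using fun o : classOrbits G X H =>
    exists_stabilizer_eq_of_mem_classOrbits o.2
  let ptB : classOrbits G X H → B := fun o => ⟨pt o, (hB _).2 ⟨1, by ext; simp [conjSub, hstab]⟩⟩
  have hstabB (o : classOrbits G X H) : stabilizer G (ptB o) = H :=
    (SubMulAction.stabilizer_of_subMul _).trans (hstab o)
  have hinj : Function.Injective fun o => orbit G (ptB o) := fun o o' h => Subtype.ext <| by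
    rw [horbit o, horbit o']
    exact (SubMulAction.val_image_orbit (ptB o)).symm.trans
      ((congrArg (Subtype.val '' ·) h).trans (SubMulAction.val_image_orbit (ptB o')))
  have hcover (y : B) : ∃ o, y ∈ orbit G (ptB o) := by
    obtain ⟨g, hg⟩ := (hB y).1 y.2
    refine ⟨⟨orbit G y, y, ⟨g, hg⟩, rfl⟩, SubMulAction.mem_orbit_subMul_iff.2 ?_⟩
    rw [← horbit]
    exact mem_orbit_self _
  let e := Equiv.ofBijective _ (prodQuotientToOrbits_bijective hstabB hinj hcover)
  exact ⟨(gAutCongr e (prodQuotientToOrbits_smul hstabB)).symm.trans (wreathEquivGAut H _).symm⟩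
end

section
/- Let G be a finite group acting on a finite set X, and let [H_1], …, [H_r] be the distinct conjugacy classes of point stabilizers, with N_i = N_G(H_i). If a G-equivariant transformation τ ∈ End_G(X) is an elementary collapsing both of type (i, [K]_{N_i}) and of type (i', [K']_{N_{i'}}), then i = i' and [K]_{N_i} = [K']_{N_i}. -/
/-- The `N`-conjugacy class `[K]_N = {gKg⁻¹ : g ∈ N}` of a subgroup `K`. -/
def nConjClass {G : Type*} [Group G] (N K : Subgroup G) : Set (Subgroup G) :=
  {L | ∃ n ∈ N, L = conjSub n K}

/-- `τ` is an elementary collapsing of type `(i, [K]_{N_i})`, where `Hi = H i`: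
there are points `x, y` in distinct orbits with `G_x = Hi`,
`[G_{τ(x)}]_{N_i} = [G_y]_{N_i} = [K]_{N_i}`, and the kernel of `τ` consists of the
pairs `(g•x, g•y)`, `(g•y, g•x)` together with the diagonal. -/
def IsElemCollapsing {G X : Type*} [Group G] [MulAction G X] (Hi K : Subgroup G)
    (τ : X → X) : Prop :=
  ∃ x y : X, MulAction.orbit G x ≠ MulAction.orbit G y ∧
    MulAction.stabilizer G x = Hi ∧
    nConjClass (Subgroup.normalizer (Hi : Set G)) (MulAction.stabilizer G (τ x)) = nConjClass (Subgroup.normalizer (Hi : Set G)) K ∧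
    nConjClass (Subgroup.normalizer (Hi : Set G)) (MulAction.stabilizer G y) = nConjClass (Subgroup.normalizer (Hi : Set G)) K ∧
    {p : X × X | τ p.1 = τ p.2} =
      {p : X × X | ∃ g : G, p = (g • x, g • y) ∨ p = (g • y, g • x)} ∪
        {p : X × X | p.1 = p.2}

/-!
Both collapsings identify exactly one orbit pair, so the witnesses `(x, y)` and `(x', y')` are
related by some `g ∈ G`, either as `(x, y) = g • (x', y')` or as `(x, y) = g • (y', x')`.
In the first case `H_i` and `H_{i'}` are conjugate by `g`, which forces `i = i'` and puts `g` in
`N_G(H_i)`, so `[G_y]_{N_i}` and `[G_{y'}]_{N_i}` agree. In the second case `K` is conjugate to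
`H_{i'}` and `K'` to `H_i`; together with `H_i ≤ K` and `H_{i'} ≤ K'` a cardinality count in the
finite group gives `H_i = K` and `H_{i'} = K'`, and we are back to conjugate representatives.
-/

section ConjSub

variable {G : Type*} [Group G]

lemma conjSub_one (K : Subgroup G) : conjSub 1 K = K := by
  ext x; simp [conjSub]

lemma conjSub_conjSub (a b : G) (K : Subgroup G) :
    conjSub a (conjSub b K) = conjSub (a * b) K := by
  simp only [conjSub, Subgroup.map_map, map_mul]
  rfl

lemma card_conjSub (a : G) (K : Subgroup G) : Nat.card (conjSub a K) = Nat.card K :=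
  (Nat.card_congr (Subgroup.equivMapOfInjective K _ (MulAut.conj a).injective).toEquiv).symm

lemma mem_normalizer_of_conjSub_eq {a : G} {K : Subgroup G} (h : conjSub a K = K) :
    a ∈ Subgroup.normalizer (K : Set G) := by
  rw [Subgroup.mem_normalizer_iff]
  intro x
  constructor
  · intro hx
    rw [← h]
    exact ⟨x, hx, rfl⟩
  · intro hx
    rw [← h] at hx
    obtain ⟨y, hy, hyx⟩ := hx
    simp only [MulEquiv.coe_toMonoidHom, MulAut.conj_apply, mul_left_inj, mul_right_inj] at hyx
    exact hyx ▸ hy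

lemma nConjClass_conjSub {N : Subgroup G} {n : G} (hn : n ∈ N) (K : Subgroup G) :
    nConjClass N (conjSub n K) = nConjClass N K := by
  ext M
  constructor
  · rintro ⟨m, hm, rfl⟩
    exact ⟨m * n, mul_mem hm hn, conjSub_conjSub m n K⟩
  · rintro ⟨m, hm, rfl⟩
    refine ⟨m * n⁻¹, mul_mem hm (inv_mem hn), ?_⟩
    rw [conjSub_conjSub, inv_mul_cancel_right]

lemma exists_eq_conjSub_of_nConjClass_eq {N K L : Subgroup G}
    (h : nConjClass N L = nConjClass N K) : ∃ n ∈ N, K = conjSub n L := by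
  have hK : K ∈ nConjClass N K := ⟨1, one_mem N, (conjSub_one K).symm⟩
  rwa [← h] at hK

lemma eq_of_le_of_le_conjSub [Finite G] {H K H' K' : Subgroup G} {a b : G}
    (hHK : H ≤ K) (hHK' : H' ≤ K') (hK : K = conjSub a H') (hK' : K' = conjSub b H) :
    H = K ∧ H' = K' := by
  have hcardK : Nat.card K = Nat.card H' := by rw [hK, card_conjSub]
  have hcardK' : Nat.card K' = Nat.card H := by rw [hK', card_conjSub]
  have hle := Subgroup.card_le_of_le hHK
  have hle' := Subgroup.card_le_of_le hHK'
  exact ⟨Subgroup.eq_of_le_of_card_ge hHK (by omega),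
    Subgroup.eq_of_le_of_card_ge hHK' (by omega)⟩

end ConjSub

section Action

variable {G X : Type*} [Group G] [MulAction G X]

lemma stabilizer_smul_eq_conjSub (g : G) (x : X) :
    MulAction.stabilizer G (g • x) = conjSub g (MulAction.stabilizer G x) :=
  MulAction.stabilizer_smul_eq_stabilizer_map_conj g x

lemma index_eq_of_eq_conjSub {ι : Type*} {H : ι → Subgroup G}
    (hH1 : ∀ i, ∃ x : X, MulAction.stabilizer G x = H i)
    (hH2 : ∀ x : X, ∃! i, ∃ g : G, MulAction.stabilizer G x = conjSub g (H i))
    {j j' : ι} {m : G} (h : H j = conjSub m (H j')) : j = j' := by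
  obtain ⟨x, hx⟩ := hH1 j
  obtain ⟨k, -, hk⟩ := hH2 x
  rw [hk j ⟨1, by rw [hx, conjSub_one]⟩, hk j' ⟨m, by rw [hx, h]⟩]

lemma exists_smul_eq_of_ker_eq {τ : X → X} {x y x' y' : X} (hxy : x ≠ y)
    (hker : {p : X × X | τ p.1 = τ p.2} =
      {p : X × X | ∃ g : G, p = (g • x, g • y) ∨ p = (g • y, g • x)} ∪ {p | p.1 = p.2})
    (hker' : {p : X × X | τ p.1 = τ p.2} =
      {p : X × X | ∃ g : G, p = (g • x', g • y') ∨ p = (g • y', g • x')} ∪ {p | p.1 = p.2}) :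
    ∃ g : G, (x = g • x' ∧ y = g • y') ∨ (x = g • y' ∧ y = g • x') := by
  have hmem : (x, y) ∈ {p : X × X | τ p.1 = τ p.2} := by
    rw [hker]
    exact Or.inl ⟨1, Or.inl (by simp)⟩
  rw [hker'] at hmem
  rcases hmem with ⟨g, hg | hg⟩ | hdiag
  · exact ⟨g, Or.inl (Prod.ext_iff.mp hg)⟩
  · exact ⟨g, Or.inr (Prod.ext_iff.mp hg)⟩
  · exact absurd hdiag hxy

end Action

theorem stmt13_general {G X : Type*} [Group G] [MulAction G X] [Finite G]
    (r : ℕ) (H : Fin r → Subgroup G)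
    (hH1 : ∀ i, ∃ x : X, MulAction.stabilizer G x = H i)
    (hH2 : ∀ x : X, ∃! i, ∃ g : G, MulAction.stabilizer G x = conjSub g (H i))
    (τ : Function.End X)
    (i i' : Fin r) (K K' : Subgroup G)
    (hK2 : H i ≤ K) (hK'2 : H i' ≤ K')
    (hc : IsElemCollapsing (H i) K τ) (hc' : IsElemCollapsing (H i') K' τ) :
    i = i' ∧ nConjClass (Subgroup.normalizer (H i : Set G)) K = nConjClass (Subgroup.normalizer (H i : Set G)) K' := by
  obtain ⟨x, y, hxy, hx, -, hy, hker⟩ := hc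
  obtain ⟨x', y', -, hx', -, hy', hker'⟩ := hc'
  have hne : x ≠ y := fun h => hxy (h ▸ rfl)
  obtain ⟨g, ⟨rfl, rfl⟩ | ⟨hgx, rfl⟩⟩ := exists_smul_eq_of_ker_eq hne hker hker'
  · rw [stabilizer_smul_eq_conjSub, hx'] at hx
    obtain rfl := index_eq_of_eq_conjSub hH1 hH2 hx.symm
    rw [stabilizer_smul_eq_conjSub,
      nConjClass_conjSub (mem_normalizer_of_conjSub_eq hx)] at hy
    exact ⟨rfl, hy.symm.trans hy'⟩
  · rw [stabilizer_smul_eq_conjSub, hx'] at hy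
    rw [← inv_smul_eq_iff.mpr hgx, stabilizer_smul_eq_conjSub, hx] at hy'
    obtain ⟨n, -, hK⟩ := exists_eq_conjSub_of_nConjClass_eq hy
    obtain ⟨n', -, hK'⟩ := exists_eq_conjSub_of_nConjClass_eq hy'
    rw [conjSub_conjSub] at hK hK'
    obtain ⟨rfl, rfl⟩ := eq_of_le_of_le_conjSub hK2 hK'2 hK hK'
    obtain rfl := index_eq_of_eq_conjSub hH1 hH2 hK
    exact ⟨rfl, rfl⟩

/-- The type of an elementary collapsing is well defined: if `τ` is an
elementary collapsing both of type `(i, [K]_{N_i})` and of type `(i', [K']_{N_{i'}})`,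
then `i = i'` and `[K]_{N_i} = [K']_{N_i}`. -/
theorem stmt13 {G X : Type*} [Group G] [MulAction G X] [Finite G] [Finite X]
    (r : ℕ) (H : Fin r → Subgroup G)
    (hH1 : ∀ i, ∃ x : X, MulAction.stabilizer G x = H i)
    (hH2 : ∀ x : X, ∃! i, ∃ g : G, MulAction.stabilizer G x = conjSub g (H i))
    (τ : Function.End X) (hτ : τ ∈ gEnd G X)
    (i i' : Fin r) (K K' : Subgroup G)
    (hK1 : ∃ x : X, MulAction.stabilizer G x = K) (hK2 : H i ≤ K)
    (hK'1 : ∃ x : X, MulAction.stabilizer G x = K') (hK'2 : H i' ≤ K')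
    (hc : IsElemCollapsing (H i) K τ) (hc' : IsElemCollapsing (H i') K' τ) :
    i = i' ∧ nConjClass (Subgroup.normalizer (H i : Set G)) K = nConjClass (Subgroup.normalizer (H i : Set G)) K' :=
  stmt13_general r H hH1 hH2 τ i i' K K' hK2 hK'2 hc hc'
end
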